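/- (Error threshold for the sharp peak landscape.) Let a ∈ [0,+∞] and let (ℓ_m) and (q_m) be sequences with ℓ_m → ∞, q_m → 0 and ℓ_m q_m → a. For each m, let x_m be a quasispecies solution for the sharp peak fitness function on 𝒜^{ℓ_m} with mutation probability q_m and some wild type w*_m, with mean fitness λ_m. Then: (i) if a > ln σ, λ_m → 1 and x_m(w*_m) → 0; (ii) if a < ln σ, λ_m → σ e^{−a} > 1 and x_m(w*_m) → (σ e^{−a} − 1)/(σ − 1). -/

import Mathlib

/-!
Write `y = x(w*)`. As `f` is `1` off the peak, the mean fitness is `λ = 1 + (σ - 1) y`, and the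
quasispecies equation at `w*` reads `y λ = σ (1 - q)^ℓ y + S`, where the inflow `S` of mutants
from the rest of the space satisfies `0 ≤ S ≤ q`. Since `q → 0` and `(1 - q)^ℓ → e^{-a}`, the
value `y` is squeezed onto a root of `y (1 + (σ - 1) y) = σ e^{-a} y`, that is `0` or
`(σ e^{-a} - 1)/(σ - 1)`. The mutation matrix is positive, so `y > 0`, which selects the second
root as soon as it is positive, i.e. when `a < ln σ`.
-/

open scoped BigOperators
open Filter Topology Finset Real

section SharpPeak

variable {E : Type*} [Fintype E] [DecidableEq E]

def sharpPeak (w : E) (σ : ℝ) (u : E) : ℝ := if u = w then σ else 1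

variable {x : E → ℝ} {w : E} {σ : ℝ}

theorem sum_mul_sharpPeak (hx1 : ∑ u, x u = 1) :
    ∑ v, x v * sharpPeak w σ v = 1 + (σ - 1) * x w := by
  have hsplit : ∀ v, x v * sharpPeak w σ v = x v + (σ - 1) * (if v = w then x v else 0) := by
    intro v
    by_cases hv : v = w <;> simp [sharpPeak, hv]; ring
  simp only [hsplit, sum_add_distrib, ← mul_sum, sum_ite_eq', mem_univ, if_true, hx1]

variable {M : E → E → ℝ}

theorem quasispecies_peak_bounds {ε : ℝ} (hx0 : ∀ u, 0 ≤ x u) (hx1 : ∑ u, x u = 1)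
    (hM0 : ∀ v, 0 ≤ M v w) (hMε : ∀ v, v ≠ w → M v w ≤ ε) (hε : 0 ≤ ε)
    (hqs : x w * ∑ v, x v * sharpPeak w σ v = ∑ v, x v * sharpPeak w σ v * M v w) :
    σ * M w w * x w ≤ x w * (1 + (σ - 1) * x w) ∧
      x w * (1 + (σ - 1) * x w) ≤ σ * M w w * x w + ε := by
  set S := ∑ v ∈ univ.erase w, x v * M v w
  have hsplit : ∑ v, x v * sharpPeak w σ v * M v w = σ * M w w * x w + S := by
    rw [← add_sum_erase _ _ (mem_univ w)]
    congr 1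
    · simp only [sharpPeak, if_true]; ring
    · refine sum_congr rfl fun v hv => ?_
      simp [sharpPeak, ne_of_mem_erase hv]
  have hS0 : 0 ≤ S := sum_nonneg fun v _ => mul_nonneg (hx0 v) (hM0 v)
  have hSε : S ≤ ε :=
    calc S ≤ ∑ v ∈ univ.erase w, x v * ε :=
          sum_le_sum fun v hv => mul_le_mul_of_nonneg_left (hMε v (ne_of_mem_erase hv)) (hx0 v)
      _ = (1 - x w) * ε := by rw [← sum_mul, sum_erase_eq_sub (mem_univ w), hx1]
      _ ≤ ε := mul_le_of_le_one_left hε (by linarith [hx0 w])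
  rw [sum_mul_sharpPeak hx1, hsplit] at hqs
  constructor <;> linarith

theorem quasispecies_peak_pos (hσ : 0 < σ) (hx0 : ∀ u, 0 ≤ x u) (hx1 : ∑ u, x u = 1)
    (hM : ∀ v, 0 < M v w)
    (hqs : x w * ∑ v, x v * sharpPeak w σ v = ∑ v, x v * sharpPeak w σ v * M v w) :
    0 < x w := by
  have hf : ∀ v, 0 < sharpPeak w σ v := fun v => by
    unfold sharpPeak; split_ifs <;> positivity
  obtain ⟨v, -, hv⟩ : ∃ v ∈ univ, (0 : E → ℝ) v < x v :=
    exists_lt_of_sum_lt (by simp [hx1])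
  have hrhs : 0 < ∑ v, x v * sharpPeak w σ v * M v w :=
    sum_pos' (fun u _ => by have := hx0 u; have := hf u; have := hM u; positivity)
      ⟨v, mem_univ v, by have := hf v; have := hM v; simp only [Pi.zero_apply] at hv; positivity⟩
  rw [← hqs] at hrhs
  exact (hx0 w).lt_of_ne fun h => by simp [← h] at hrhs

end SharpPeak

section Mutation

variable {A : Type*} [DecidableEq A]

noncomputable def mutationMatrix (κ : ℕ) (q : ℝ) {ℓ : ℕ} (v u : Fin ℓ → A) : ℝ :=
  (q / ((κ : ℝ) - 1)) ^ hammingDist v u * (1 - q) ^ (ℓ - hammingDist v u)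

variable {κ ℓ : ℕ} {q : ℝ}

theorem mutationMatrix_self (v : Fin ℓ → A) : mutationMatrix κ q v v = (1 - q) ^ ℓ := by
  simp [mutationMatrix]

theorem mutationMatrix_pos (hκ : 2 ≤ κ) (hq0 : 0 < q) (hq1 : q < 1) (v u : Fin ℓ → A) :
    0 < mutationMatrix κ q v u := by
  have : (2 : ℝ) ≤ κ := by exact_mod_cast hκ
  have : 0 < q / ((κ : ℝ) - 1) := div_pos hq0 (by linarith)
  have : 0 < 1 - q := by linarith
  unfold mutationMatrix
  positivity

theorem mutationMatrix_le_of_ne (hκ : 2 ≤ κ) (hq0 : 0 ≤ q) (hq1 : q ≤ 1) {v u : Fin ℓ → A}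
    (hvu : v ≠ u) : mutationMatrix κ q v u ≤ q := by
  have hκ' : (1 : ℝ) ≤ κ - 1 := by
    have : (2 : ℝ) ≤ κ := by exact_mod_cast hκ
    linarith
  have hp0 : 0 ≤ q / ((κ : ℝ) - 1) := div_nonneg hq0 (by linarith)
  have hpq : q / ((κ : ℝ) - 1) ≤ q := div_le_self hq0 hκ'
  calc mutationMatrix κ q v u ≤ q / ((κ : ℝ) - 1) * 1 := by
        unfold mutationMatrix
        gcongr
        · exact pow_le_of_le_one hp0 (hpq.trans hq1) (hammingDist_ne_zero.mpr hvu)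
        · exact pow_le_one₀ (by linarith) (by linarith)
    _ ≤ q := by rwa [mul_one]

theorem quasispecies_mutationMatrix_peak_bounds [Fintype A] {x : (Fin ℓ → A) → ℝ}
    {w : Fin ℓ → A} {σ : ℝ} (hσ : 0 < σ) (hκ : 2 ≤ κ) (hq0 : 0 < q) (hq1 : q < 1)
    (hx0 : ∀ u, 0 ≤ x u) (hx1 : ∑ u, x u = 1)
    (hqs : x w * ∑ v, x v * sharpPeak w σ v =
      ∑ v, x v * sharpPeak w σ v * mutationMatrix κ q v w) :
    0 < x w ∧ σ * (1 - q) ^ ℓ * x w ≤ x w * (1 + (σ - 1) * x w) ∧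
      x w * (1 + (σ - 1) * x w) ≤ σ * (1 - q) ^ ℓ * x w + q := by
  have hM : ∀ v, 0 < mutationMatrix κ q v w := fun v => mutationMatrix_pos hκ hq0 hq1 v w
  rw [← mutationMatrix_self (κ := κ) (q := q) w]
  exact ⟨quasispecies_peak_pos hσ hx0 hx1 hM hqs, quasispecies_peak_bounds hx0 hx1
    (fun v => (hM v).le) (fun v => mutationMatrix_le_of_ne hκ hq0.le hq1.le) hq0.le hqs⟩

end Mutation

theorem one_sub_pow_le_exp_neg_mul {q : ℝ} (hq : q ≤ 1) (n : ℕ) :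
    (1 - q) ^ n ≤ exp (-(n * q)) :=
  calc (1 - q) ^ n ≤ exp (-q) ^ n := pow_le_pow_left₀ (by linarith) (one_sub_le_exp_neg q) n
    _ = exp (-(n * q)) := by rw [← exp_nat_mul]; ring_nf

theorem tendsto_one_sub_pow_exp {ι : Type*} {l : Filter ι} {ℓ : ι → ℕ} {q : ι → ℝ} {t : ℝ}
    (hq : Tendsto q l (𝓝 0)) (hlq : Tendsto (fun i => ℓ i * q i) l (𝓝 t)) :
    Tendsto (fun i => (1 - q i) ^ ℓ i) l (𝓝 (exp (-t))) := by
  have hq1 : ∀ᶠ i in l, q i < 1 := hq.eventually_lt_const one_pos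
  -- `-q / (1 - q) ≤ log (1 - q) ≤ -q`
  have hlow : Tendsto (fun i => -(ℓ i * q i / (1 - q i))) l (𝓝 (-t)) := by
    simpa using (hlq.div ((tendsto_const_nhds (x := (1 : ℝ))).sub hq) (by simp)).neg
  have hlog : Tendsto (fun i => ℓ i * log (1 - q i)) l (𝓝 (-t)) := by
    refine tendsto_of_tendsto_of_tendsto_of_le_of_le' hlow hlq.neg ?_ ?_
    · filter_upwards [hq1] with i hi
      have h1q : 1 - q i ≠ 0 := (sub_pos.mpr hi).ne'
      calc -(ℓ i * q i / (1 - q i)) = ℓ i * (1 - (1 - q i)⁻¹) := by field_simp; ring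
        _ ≤ ℓ i * log (1 - q i) := by gcongr; exact one_sub_inv_le_log_of_pos (sub_pos.mpr hi)
    · filter_upwards [hq1] with i hi
      calc ℓ i * log (1 - q i) ≤ ℓ i * (1 - q i - 1) := by
            gcongr; exact log_le_sub_one_of_pos (sub_pos.mpr hi)
        _ = -(ℓ i * q i) := by ring
  refine ((continuous_exp.tendsto _).comp hlog).congr' ?_
  filter_upwards [hq1] with i hi
  simp [exp_nat_mul, exp_log (sub_pos.mpr hi)]

theorem one_lt_mul_exp_neg_iff {σ t : ℝ} (hσ : 0 < σ) : 1 < σ * exp (-t) ↔ t < log σ := by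
  rw [lt_log_iff_exp_lt hσ, exp_neg, ← div_eq_mul_inv, one_lt_div (exp_pos t)]

theorem mul_exp_neg_le_one_iff {σ t : ℝ} (hσ : 0 < σ) : σ * exp (-t) ≤ 1 ↔ log σ ≤ t := by
  rw [← not_lt, one_lt_mul_exp_neg_iff hσ, not_lt]

section PeakLimits

variable {ι : Type*} {l : Filter ι} {σ : ℝ} {y c ε : ι → ℝ}

theorem tendsto_zero_of_peak_bounds (hσ : 1 < σ) (hy : ∀ i, 0 ≤ y i)
    (hc : ∀ᶠ i in l, σ * c i ≤ 1) (hε : Tendsto ε l (𝓝 0))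
    (hup : ∀ i, y i * (1 + (σ - 1) * y i) ≤ σ * c i * y i + ε i) :
    Tendsto y l (𝓝 0) := by
  have hsq : ∀ᶠ i in l, y i ^ 2 ≤ ε i / (σ - 1) := by
    filter_upwards [hc] with i hi
    rw [le_div_iff₀ (by linarith)]
    nlinarith [hup i, hy i]
  have hsq_lim : Tendsto (fun i => y i ^ 2) l (𝓝 0) := by
    refine tendsto_of_tendsto_of_tendsto_of_le_of_le' tendsto_const_nhds ?_
      (Eventually.of_forall fun i => sq_nonneg (y i)) hsq
    simpa using hε.div_const (σ - 1)
  simpa [sqrt_sq (hy _)] using hsq_lim.sqrt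

theorem tendsto_of_peak_bounds {e : ℝ} (hσ : 1 < σ) (hσe : 1 < σ * e) (hy : ∀ i, 0 < y i)
    (hc : Tendsto c l (𝓝 e)) (hε : Tendsto ε l (𝓝 0))
    (hlow : ∀ i, σ * c i * y i ≤ y i * (1 + (σ - 1) * y i))
    (hup : ∀ i, y i * (1 + (σ - 1) * y i) ≤ σ * c i * y i + ε i) :
    Tendsto y l (𝓝 ((σ * e - 1) / (σ - 1))) := by
  have hσ1 : 0 < σ - 1 := by linarith
  -- `b` is the nonzero root of `y (1 + (σ - 1) y) = σ c y`
  set b := fun i => (σ * c i - 1) / (σ - 1)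
  have hb : Tendsto b l (𝓝 ((σ * e - 1) / (σ - 1))) :=
    ((hc.const_mul σ).sub_const 1).div_const _
  have hb_pos : ∀ᶠ i in l, 0 < b i := hb.eventually_const_lt (div_pos (by linarith) hσ1)
  have hb_le : ∀ i, b i ≤ y i := fun i => by
    rw [div_le_iff₀ hσ1]
    nlinarith [hlow i, hy i]
  have hle_b : ∀ᶠ i in l, y i ≤ b i + ε i / ((σ - 1) * b i) := by
    filter_upwards [hb_pos] with i hi
    have hb_root : (σ - 1) * b i = σ * c i - 1 := mul_div_cancel₀ _ hσ1.ne'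
    have hyb : (σ - 1) * y i * (y i - b i) ≤ ε i :=
      calc (σ - 1) * y i * (y i - b i) = y i * (1 + (σ - 1) * y i) - y i * (1 + (σ - 1) * b i) := by
            ring
        _ = y i * (1 + (σ - 1) * y i) - σ * c i * y i := by rw [hb_root]; ring
        _ ≤ ε i := by linarith [hup i]
    have hby : (σ - 1) * b i * (y i - b i) ≤ ε i := by
      nlinarith [hb_le i, mul_le_mul_of_nonneg_left (hb_le i) hσ1.le]
    rw [← sub_le_iff_le_add', le_div_iff₀ (by positivity)]
    linarith
  have hlim : Tendsto (fun i => b i + ε i / ((σ - 1) * b i)) l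
      (𝓝 ((σ * e - 1) / (σ - 1))) := by
    simpa using hb.add (hε.div (hb.const_mul (σ - 1)) (by positivity))
  exact tendsto_of_tendsto_of_tendsto_of_le_of_le' hb hlim (Eventually.of_forall hb_le) hle_b

end PeakLimits

theorem error_threshold_sharp_peak_general
    (A : Type*) [Fintype A] [DecidableEq A] (κ : ℕ)
    (hκ2 : 2 ≤ κ)
    (σ : ℝ) (hσ : 1 < σ)
    (a : EReal) (ha : (0 : EReal) ≤ a)
    (ℓ : ℕ → ℕ) (q : ℕ → ℝ)
    (hq0 : ∀ m, 0 < q m) (hq1 : ∀ m, q m < ((κ : ℝ) - 1) / κ)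
    (hq : Tendsto q atTop (𝓝 0))
    (hlq : Tendsto (fun m => (((ℓ m : ℝ) * q m : ℝ) : EReal)) atTop (𝓝 a))
    (wstar : ∀ m, Fin (ℓ m) → A)
    (f : ∀ m, (Fin (ℓ m) → A) → ℝ)
    (hf : ∀ m u, f m u = if u = wstar m then σ else 1)
    (x : ∀ m, (Fin (ℓ m) → A) → ℝ)
    (hx0 : ∀ m u, 0 ≤ x m u) (hx1 : ∀ m, ∑ u, x m u = 1)
    (hqs : ∀ m u, x m u * (∑ v, x m v * f m v) =
      ∑ v, x m v * f m v *
        ((q m / ((κ : ℝ) - 1)) ^ hammingDist v u *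
          (1 - q m) ^ (ℓ m - hammingDist v u))) :
    (((Real.log σ : ℝ) : EReal) < a →
      Tendsto (fun m => ∑ v, x m v * f m v) atTop (𝓝 1) ∧
        Tendsto (fun m => x m (wstar m)) atTop (𝓝 0)) ∧
    (a < ((Real.log σ : ℝ) : EReal) →
      1 < σ * Real.exp (-a.toReal) ∧
        Tendsto (fun m => ∑ v, x m v * f m v) atTop (𝓝 (σ * Real.exp (-a.toReal))) ∧
        Tendsto (fun m => x m (wstar m)) atTop
          (𝓝 ((σ * Real.exp (-a.toReal) - 1) / (σ - 1)))) := by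
  obtain rfl : f = fun m => sharpPeak (wstar m) σ := funext₂ hf
  have hq_lt_one : ∀ m, q m < 1 := fun m =>
    (hq1 m).trans_le (div_le_one_of_le₀ (by linarith) (Nat.cast_nonneg κ))
  have hmean : ∀ m, ∑ v, x m v * sharpPeak (wstar m) σ v = 1 + (σ - 1) * x m (wstar m) :=
    fun m => sum_mul_sharpPeak (hx1 m)
  choose hpos hlow hup using fun m => quasispecies_mutationMatrix_peak_bounds
    (by linarith) hκ2 (hq0 m) (hq_lt_one m) (hx0 m) (hx1 m) (hqs m (wstar m))
  simp only [hmean]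
  refine ⟨fun hgt => ?_, fun hlt => ?_⟩
  · have hc : ∀ᶠ m in atTop, σ * (1 - q m) ^ ℓ m ≤ 1 := by
      filter_upwards [hlq.eventually_const_lt hgt] with m hm
      calc σ * (1 - q m) ^ ℓ m ≤ σ * exp (-(ℓ m * q m)) := by
            gcongr; exact one_sub_pow_le_exp_neg_mul (hq_lt_one m).le _
        _ ≤ 1 := (mul_exp_neg_le_one_iff (by linarith)).mpr (EReal.coe_le_coe_iff.mp hm.le)
    have hy := tendsto_zero_of_peak_bounds hσ (fun m => (hpos m).le) hc hq hup
    exact ⟨by simpa using (hy.const_mul (σ - 1)).const_add 1, hy⟩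
  · induction a using EReal.rec with
    | bot => simp at ha
    | top => simp at hlt
    | coe t =>
      simp only [EReal.toReal_coe]
      have hσe : 1 < σ * exp (-t) :=
        (one_lt_mul_exp_neg_iff (by linarith)).mpr (EReal.coe_lt_coe_iff.mp hlt)
      have hy := tendsto_of_peak_bounds hσ hσe hpos
        (tendsto_one_sub_pow_exp hq (EReal.tendsto_coe.mp hlq)) hq hlow hup
      refine ⟨hσe, ?_, hy⟩
      convert (hy.const_mul (σ - 1)).const_add 1 using 2
      rw [mul_div_cancel₀ _ (by linarith : σ - 1 ≠ 0)]
      ring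

/-- Error threshold for the sharp peak landscape in the long chain regime:
if `a > ln σ` then `λ_m → 1` and `x_m(w*_m) → 0`; if `a < ln σ` then
`λ_m → σ e^{-a} > 1` and `x_m(w*_m) → (σ e^{-a} - 1)/(σ - 1)`. -/
theorem error_threshold_sharp_peak
    (A : Type*) [Fintype A] [DecidableEq A] (κ : ℕ)
    (hκ : Fintype.card A = κ) (hκ2 : 2 ≤ κ)
    (σ : ℝ) (hσ : 1 < σ)
    (a : EReal) (ha : (0 : EReal) ≤ a)
    (ℓ : ℕ → ℕ) (q : ℕ → ℝ)
    (hℓ : Tendsto ℓ atTop atTop)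
    (hq0 : ∀ m, 0 < q m) (hq1 : ∀ m, q m < ((κ : ℝ) - 1) / κ)
    (hq : Tendsto q atTop (𝓝 0))
    (hlq : Tendsto (fun m => (((ℓ m : ℝ) * q m : ℝ) : EReal)) atTop (𝓝 a))
    (wstar : ∀ m, Fin (ℓ m) → A)
    (f : ∀ m, (Fin (ℓ m) → A) → ℝ)
    (hf : ∀ m u, f m u = if u = wstar m then σ else 1)
    (x : ∀ m, (Fin (ℓ m) → A) → ℝ)
    (hx0 : ∀ m u, 0 ≤ x m u) (hx1 : ∀ m, ∑ u, x m u = 1)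
    (hqs : ∀ m u, x m u * (∑ v, x m v * f m v) =
      ∑ v, x m v * f m v *
        ((q m / ((κ : ℝ) - 1)) ^ hammingDist v u *
          (1 - q m) ^ (ℓ m - hammingDist v u))) :
    (((Real.log σ : ℝ) : EReal) < a →
      Tendsto (fun m => ∑ v, x m v * f m v) atTop (𝓝 1) ∧
        Tendsto (fun m => x m (wstar m)) atTop (𝓝 0)) ∧
    (a < ((Real.log σ : ℝ) : EReal) →
      1 < σ * Real.exp (-a.toReal) ∧
        Tendsto (fun m => ∑ v, x m v * f m v) atTop (𝓝 (σ * Real.exp (-a.toReal))) ∧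
        Tendsto (fun m => x m (wstar m)) atTop
          (𝓝 ((σ * Real.exp (-a.toReal) - 1) / (σ - 1)))) :=
  error_threshold_sharp_peak_general A κ hκ2 σ hσ a ha ℓ q hq0 hq1 hq hlq wstar f hf x hx0 hx1 hqs
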